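/- Let S : X → E be an admissible impact map and A ⊂ E an admissible acceptance set, and define ρ̃ : X → [−∞,∞] by ρ̃(X) = inf{m ∈ ℝ : S(X) + m ∈ A}. Then ρ̃ is convex, σ(X,X')-lower semicontinuous, and satisfies ρ̃(0) ≤ 0. Moreover, ρ̃ is proper if and only if ρ̃(0) > −∞, if and only if A ∩ (−ℝ_+) ≠ −ℝ_+ (where nonpositive reals are identified with constant random variables in E). -/

import Mathlib

open MeasureTheory Filter Set
open scoped ENNReal

noncomputable section

namespace SystemicRisk

variable {Ω : Type*} [MeasurableSpace Ω]

/-- A random variable is essentially bounded. -/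
def EssBdd {μ : Measure Ω} (f : Ω →ₘ[μ] ℝ) : Prop :=
  ∃ C : ℝ, ∀ᵐ ω ∂μ, |f ω| ≤ C

/-- The scalar pairing `E[U W]`. -/
def ip {μ : Measure Ω} (U W : Ω →ₘ[μ] ℝ) : ℝ := ∫ ω, U ω * W ω ∂μ

/-- The Köthe dual of a set of random variables. -/
def kdual {μ : Measure Ω} (L : Set (Ω →ₘ[μ] ℝ)) : Set (Ω →ₘ[μ] ℝ) :=
  {Z | ∀ f ∈ L, Integrable (fun ω => f ω * Z ω) μ}

/-- `nrm` is a Banach lattice norm on `L` (w.r.t. the a.s. order). -/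
structure IsBLNorm {μ : Measure Ω} (L : Set (Ω →ₘ[μ] ℝ)) (nrm : (Ω →ₘ[μ] ℝ) → ℝ) : Prop where
  nonneg : ∀ f ∈ L, 0 ≤ nrm f
  eq_zero_iff : ∀ f ∈ L, (nrm f = 0 ↔ f = 0)
  smul_eq : ∀ f ∈ L, ∀ c : ℝ, nrm (c • f) = |c| * nrm f
  triangle : ∀ f ∈ L, ∀ g ∈ L, nrm (f + g) ≤ nrm f + nrm g
  solid : ∀ f ∈ L, ∀ g ∈ L, |f| ≤ |g| → nrm f ≤ nrm g
  complete : ∀ u : ℕ → (Ω →ₘ[μ] ℝ), (∀ n, u n ∈ L) →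
      (∀ ε : ℝ, 0 < ε → ∃ N : ℕ, ∀ m ≥ N, ∀ n ≥ N, nrm (u m - u n) < ε) →
      ∃ f ∈ L, ∀ ε : ℝ, 0 < ε → ∃ N : ℕ, ∀ n ≥ N, nrm (u n - f) < ε

/-- `L` is an admissible space: a linear subspace of `L^0` which is a Banach lattice
(for the a.s. order, with norm `nrm`) satisfying `L^∞ ⊆ L ⊆ L^1`. -/
structure IsAdmissible {μ : Measure Ω} (L : Set (Ω →ₘ[μ] ℝ)) (nrm : (Ω →ₘ[μ] ℝ) → ℝ) : Prop where
  zero_mem : (0 : Ω →ₘ[μ] ℝ) ∈ L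
  add_mem : ∀ f ∈ L, ∀ g ∈ L, f + g ∈ L
  smul_mem : ∀ (c : ℝ), ∀ f ∈ L, c • f ∈ L
  sup_mem : ∀ f ∈ L, ∀ g ∈ L, f ⊔ g ∈ L
  inf_mem : ∀ f ∈ L, ∀ g ∈ L, f ⊓ g ∈ L
  linfty_subset : ∀ f, EssBdd f → f ∈ L
  subset_lone : ∀ f ∈ L, Integrable f μ
  banach : IsBLNorm L nrm

variable {d : ℕ}

/-- The product space `X = X_1 × ⋯ × X_d`. -/
def prodSet {μ : Measure Ω} (Li : Fin d → Set (Ω →ₘ[μ] ℝ)) : Set (Fin d → (Ω →ₘ[μ] ℝ)) :=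
  {X | ∀ i, X i ∈ Li i}

/-- The vector pairing `E[⟨X,Z⟩] = ∑ i, E[X_i Z_i]`. -/
def pairing {μ : Measure Ω} (X Z : Fin d → (Ω →ₘ[μ] ℝ)) : ℝ := ∑ i, ip (X i) (Z i)

/-- The constant random vector associated with `m ∈ ℝ^d`. -/
def cvec (μ : Measure Ω) (m : Fin d → ℝ) : Fin d → (Ω →ₘ[μ] ℝ) :=
  fun i => (AEEqFun.const Ω (m i) : Ω →ₘ[μ] ℝ)

/-- The weak topology `σ(P, D)` on a set of random vectors `P` induced by the pairing
with elements of `D`. -/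
def wtop {μ : Measure Ω} (P D : Set (Fin d → (Ω →ₘ[μ] ℝ))) : TopologicalSpace ↥P :=
  TopologicalSpace.induced
    (fun X : ↥P => fun Z : ↥D => pairing (X : Fin d → (Ω →ₘ[μ] ℝ)) (Z : Fin d → (Ω →ₘ[μ] ℝ)))
    Pi.topologicalSpace

/-- The weak topology `σ(P, D)` on a set of random variables `P` induced by the pairing
with elements of `D`. -/
def wtop1 {μ : Measure Ω} (P D : Set (Ω →ₘ[μ] ℝ)) : TopologicalSpace ↥P :=
  TopologicalSpace.induced
    (fun U : ↥P => fun W : ↥D => ip (U : Ω →ₘ[μ] ℝ) (W : Ω →ₘ[μ] ℝ))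
    Pi.topologicalSpace

/-- An admissible impact map `S : X → E`. -/
structure IsAdmissibleImpact {μ : Measure Ω} (XX XX' : Set (Fin d → (Ω →ₘ[μ] ℝ)))
    (EE EE' : Set (Ω →ₘ[μ] ℝ)) (S : (Fin d → (Ω →ₘ[μ] ℝ)) → (Ω →ₘ[μ] ℝ)) : Prop where
  mapsTo : ∀ X ∈ XX, S X ∈ EE
  nonconst : ∃ X ∈ XX, ∃ Y ∈ XX, S X ≠ S Y
  normalized : S 0 = 0
  mono : ∀ X ∈ XX, ∀ Y ∈ XX, X ≤ Y → S X ≤ S Y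
  concave : ∀ X ∈ XX, ∀ Y ∈ XX, ∀ t : ℝ, 0 ≤ t → t ≤ 1 →
      t • S X + (1 - t) • S Y ≤ S (t • X + (1 - t) • Y)
  usc : ∀ W ∈ EE', (0 : Ω →ₘ[μ] ℝ) ≤ W →
      @UpperSemicontinuous (↥XX) ℝ (wtop XX XX') _
        (fun X : ↥XX => ∫ ω, S (X : Fin d → (Ω →ₘ[μ] ℝ)) ω * W ω ∂μ)

/-- An admissible acceptance set `A ⊆ E` (relative to the impact map `S`). -/
structure IsAdmissibleAcceptance {μ : Measure Ω} (XX : Set (Fin d → (Ω →ₘ[μ] ℝ)))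
    (EE EE' : Set (Ω →ₘ[μ] ℝ)) (S : (Fin d → (Ω →ₘ[μ] ℝ)) → (Ω →ₘ[μ] ℝ))
    (A : Set (Ω →ₘ[μ] ℝ)) : Prop where
  subset : A ⊆ EE
  preimage_nonempty : ∃ X ∈ XX, S X ∈ A
  preimage_proper : ∃ X ∈ XX, S X ∉ A
  zero_mem : (0 : Ω →ₘ[μ] ℝ) ∈ A
  mono : ∀ U ∈ A, ∀ V ∈ EE, (0 : Ω →ₘ[μ] ℝ) ≤ V → U + V ∈ A
  convex : ∀ U ∈ A, ∀ V ∈ A, ∀ t : ℝ, 0 ≤ t → t ≤ 1 → t • U + (1 - t) • V ∈ A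
  closed : @IsClosed (↥EE) (wtop1 EE EE') {U : ↥EE | (U : Ω →ₘ[μ] ℝ) ∈ A}

/-- The systemic acceptance set `S⁻¹(A) = {X ∈ X : S(X) ∈ A}`. -/
def sysAcc {μ : Measure Ω} (XX : Set (Fin d → (Ω →ₘ[μ] ℝ)))
    (S : (Fin d → (Ω →ₘ[μ] ℝ)) → (Ω →ₘ[μ] ℝ)) (A : Set (Ω →ₘ[μ] ℝ)) :
    Set (Fin d → (Ω →ₘ[μ] ℝ)) :=
  {X ∈ XX | S X ∈ A}

/-- The "first allocate, then aggregate" systemic risk measure `ρ`. -/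
def rho (μ : Measure Ω) (S : (Fin d → (Ω →ₘ[μ] ℝ)) → (Ω →ₘ[μ] ℝ)) (A : Set (Ω →ₘ[μ] ℝ))
    (X : Fin d → (Ω →ₘ[μ] ℝ)) : EReal :=
  ⨅ m ∈ {m : Fin d → ℝ | S (X + cvec μ m) ∈ A}, ((∑ i, m i : ℝ) : EReal)

/-- The (lower) support function of a set of random vectors. -/
def suppV {μ : Measure Ω} (B : Set (Fin d → (Ω →ₘ[μ] ℝ))) (Z : Fin d → (Ω →ₘ[μ] ℝ)) : EReal :=
  ⨅ X ∈ B, ((pairing X Z : ℝ) : EReal)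

/-- The barrier cone of a set of random vectors, inside the dual set `D`. -/
def barrV {μ : Measure Ω} (B D : Set (Fin d → (Ω →ₘ[μ] ℝ))) : Set (Fin d → (Ω →ₘ[μ] ℝ)) :=
  {Z ∈ D | ⊥ < suppV B Z}

/-- The (lower) support function of a set of random variables. -/
def suppS {μ : Measure Ω} (A : Set (Ω →ₘ[μ] ℝ)) (W : Ω →ₘ[μ] ℝ) : EReal :=
  ⨅ U ∈ A, ((ip U W : ℝ) : EReal)

/-- The barrier cone of a set of random variables, inside the dual set `D`. -/
def barrS {μ : Measure Ω} (A D : Set (Ω →ₘ[μ] ℝ)) : Set (Ω →ₘ[μ] ℝ) :=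
  {W ∈ D | ⊥ < suppS A W}

/-- The generic penalty function with dual variables `W` ranging over `K`. -/
def penalty {μ : Measure Ω} (XX : Set (Fin d → (Ω →ₘ[μ] ℝ)))
    (A : Set (Ω →ₘ[μ] ℝ)) (S : (Fin d → (Ω →ₘ[μ] ℝ)) → (Ω →ₘ[μ] ℝ))
    (K : Set (Ω →ₘ[μ] ℝ)) (Z : Fin d → (Ω →ₘ[μ] ℝ)) : EReal :=
  ⨆ W ∈ K, (suppS A W +
    ⨅ X ∈ XX, ((pairing X Z - ∫ ω, S X ω * W ω ∂μ : ℝ) : EReal))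

/-- a.s. strictly positive random variables. -/
def strictPos (μ : Measure Ω) : Set (Ω →ₘ[μ] ℝ) := {W | ∀ᵐ ω ∂μ, 0 < W ω}

/-- The penalty function `α`. -/
def alpha {μ : Measure Ω} (XX : Set (Fin d → (Ω →ₘ[μ] ℝ))) (EE' : Set (Ω →ₘ[μ] ℝ))
    (A : Set (Ω →ₘ[μ] ℝ)) (S : (Fin d → (Ω →ₘ[μ] ℝ)) → (Ω →ₘ[μ] ℝ)) :
    (Fin d → (Ω →ₘ[μ] ℝ)) → EReal :=
  penalty XX A S (barrS A EE')

/-- The penalty function `α⁺`. -/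
def alphaPlus {μ : Measure Ω} (XX : Set (Fin d → (Ω →ₘ[μ] ℝ))) (EE' : Set (Ω →ₘ[μ] ℝ))
    (A : Set (Ω →ₘ[μ] ℝ)) (S : (Fin d → (Ω →ₘ[μ] ℝ)) → (Ω →ₘ[μ] ℝ)) :
    (Fin d → (Ω →ₘ[μ] ℝ)) → EReal :=
  penalty XX A S (barrS A EE' ∩ (strictPos μ ∪ {0}))

/-- a.s. strictly positive random vectors. -/
def strictPosV (μ : Measure Ω) (d : ℕ) : Set (Fin d → (Ω →ₘ[μ] ℝ)) :=
  {Z | ∀ i, ∀ᵐ ω ∂μ, 0 < Z i ω}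

/-- The set `C` of nonnegative dual vectors with all components of expectation one. -/
def Cset {μ : Measure Ω} (XX' : Set (Fin d → (Ω →ₘ[μ] ℝ))) : Set (Fin d → (Ω →ₘ[μ] ℝ)) :=
  {Z ∈ XX' | (∀ i, (0 : Ω →ₘ[μ] ℝ) ≤ Z i) ∧ ∀ i, (∫ ω, Z i ω ∂μ) = 1}

/-- A map with values in `[−∞,∞]` is proper on `P` if it never attains `−∞` on `P`
and is finite somewhere on `P`. -/
def ProperOn {β : Type*} (P : Set β) (f : β → EReal) : Prop :=
  (∀ x ∈ P, f x ≠ ⊥) ∧ ∃ x ∈ P, f x ≠ ⊤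

/-- The positive part of an extended real number, as an extended nonnegative real. -/
def epos (x : EReal) : ℝ≥0∞ := if x = ⊤ then ⊤ else ENNReal.ofReal x.toReal

/-- The integral of an extended-real-valued function. -/
def eintegral (μ : Measure Ω) (g : Ω → EReal) : EReal :=
  ((∫⁻ ω, epos (g ω) ∂μ : ℝ≥0∞) : EReal) - ((∫⁻ ω, epos (-(g ω)) ∂μ : ℝ≥0∞) : EReal)


/-- The "first aggregate, then allocate" systemic risk measure `ρ̃`. -/
def rhoT (μ : Measure Ω) {d : ℕ} (S : (Fin d → (Ω →ₘ[μ] ℝ)) → (Ω →ₘ[μ] ℝ))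
    (A : Set (Ω →ₘ[μ] ℝ)) (X : Fin d → (Ω →ₘ[μ] ℝ)) : EReal :=
  ⨅ m ∈ {m : ℝ | S X + (AEEqFun.const Ω m : Ω →ₘ[μ] ℝ) ∈ A}, ((m : ℝ) : EReal)

/-!
Because `A` is convex, monotone and `σ(E,E')`-closed, Hahn–Banach in the weak topology writes `A`
as an intersection of half-spaces `{U | c ≤ E[U ψ]}` with `0 ≤ ψ ∈ E'`. Hence
`{X | ρ̃(X) ≤ y} = {X | S(X) + y ∈ A}` is an intersection of superlevel sets of the upper
semicontinuous maps `X ↦ E[S(X) ψ]`: the infimum defining `ρ̃` is attained and `ρ̃` is lower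
semicontinuous. Convexity follows from concavity and monotonicity of `S`. Finally `S⁻¹(A) ≠ X`
forces `A ≠ E`, and a functional separating a point from `A` has `E[ψ] > 0`, which bounds `ρ̃`
from below everywhere; so `ρ̃` is proper, `ρ̃(0) > −∞`, and `A` misses some nonpositive constant.
-/

section RandomVariables

variable {μ : Measure Ω}

lemma nonneg_iff_ae_nonneg {f : Ω →ₘ[μ] ℝ} : 0 ≤ f ↔ ∀ᵐ ω ∂μ, 0 ≤ f ω := by
  rw [← AEEqFun.coeFn_le]
  refine eventually_congr ?_
  filter_upwards [AEEqFun.coeFn_zero (μ := μ) (β := ℝ)] with ω h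
  rw [h, Pi.zero_apply]

lemma const_nonneg {c : ℝ} (hc : 0 ≤ c) : 0 ≤ (AEEqFun.const Ω c : Ω →ₘ[μ] ℝ) :=
  nonneg_iff_ae_nonneg.mpr <| (AEEqFun.coeFn_const Ω c).mono fun _ h => h ▸ hc

lemma sub_nonneg_of_le' {f g : Ω →ₘ[μ] ℝ} (h : f ≤ g) : 0 ≤ g - f := by
  refine nonneg_iff_ae_nonneg.mpr ?_
  filter_upwards [AEEqFun.coeFn_le.mpr h, AEEqFun.coeFn_sub g f] with ω h hsub
  rw [hsub, Pi.sub_apply, sub_nonneg]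
  exact h

lemma smul_nonneg_of_nonneg {c : ℝ} (hc : 0 ≤ c) {f : Ω →ₘ[μ] ℝ} (hf : 0 ≤ f) : 0 ≤ c • f := by
  refine nonneg_iff_ae_nonneg.mpr ?_
  filter_upwards [nonneg_iff_ae_nonneg.mp hf, AEEqFun.coeFn_smul c f] with ω h hsmul
  rw [hsmul, Pi.smul_apply, smul_eq_mul]
  exact mul_nonneg hc h

lemma const_add_const (a b : ℝ) :
    (AEEqFun.const Ω a + AEEqFun.const Ω b : Ω →ₘ[μ] ℝ) = AEEqFun.const Ω (a + b) :=
  rfl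

lemma smul_const (a b : ℝ) : a • (AEEqFun.const Ω b : Ω →ₘ[μ] ℝ) = AEEqFun.const Ω (a * b) :=
  rfl

lemma essBdd_const (c : ℝ) : EssBdd (AEEqFun.const Ω c : Ω →ₘ[μ] ℝ) :=
  ⟨|c|, (AEEqFun.coeFn_const Ω c).mono fun _ h => by rw [h]; exact le_rfl⟩

lemma ip_add {U V W : Ω →ₘ[μ] ℝ} (hU : Integrable (fun ω => U ω * W ω) μ)
    (hV : Integrable (fun ω => V ω * W ω) μ) : ip (U + V) W = ip U W + ip V W := by
  rw [ip, ip, ip, ← integral_add hU hV]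
  refine integral_congr_ae ?_
  filter_upwards [AEEqFun.coeFn_add U V] with ω h
  rw [h, Pi.add_apply, add_mul]

lemma ip_smul (c : ℝ) (U W : Ω →ₘ[μ] ℝ) : ip (c • U) W = c * ip U W := by
  rw [ip, ip, ← integral_const_mul]
  refine integral_congr_ae ?_
  filter_upwards [AEEqFun.coeFn_smul c U] with ω h
  rw [h, Pi.smul_apply, smul_eq_mul, mul_assoc]

lemma ip_const (m : ℝ) (W : Ω →ₘ[μ] ℝ) :
    ip (AEEqFun.const Ω m : Ω →ₘ[μ] ℝ) W = m * ∫ ω, W ω ∂μ := by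
  rw [ip, ← integral_const_mul]
  refine integral_congr_ae ?_
  filter_upwards [AEEqFun.coeFn_const Ω m] with ω h
  rw [h, Function.const_apply]

lemma ip_zero (W : Ω →ₘ[μ] ℝ) : ip 0 W = 0 :=
  (ip_const 0 W).trans (zero_mul _)

lemma ip_add_const {U W : Ω →ₘ[μ] ℝ} (hU : Integrable (fun ω => U ω * W ω) μ)
    (hW : Integrable W μ) (m : ℝ) :
    ip (U + AEEqFun.const Ω m) W = ip U W + m * ∫ ω, W ω ∂μ := by
  have hm : Integrable (fun ω => (AEEqFun.const Ω m : Ω →ₘ[μ] ℝ) ω * W ω) μ := by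
    refine (hW.const_mul m).congr ?_
    filter_upwards [AEEqFun.coeFn_const Ω m] with ω h
    rw [h, Function.const_apply]
  rw [ip_add hU hm, ip_const]

lemma IsAdmissible.sub_mem {L : Set (Ω →ₘ[μ] ℝ)} {nrm : (Ω →ₘ[μ] ℝ) → ℝ}
    (hL : IsAdmissible L nrm) {f g : Ω →ₘ[μ] ℝ} (hf : f ∈ L) (hg : g ∈ L) : f - g ∈ L := by
  simpa [sub_eq_add_neg] using hL.add_mem _ hf _ (hL.smul_mem (-1) _ hg)

lemma IsAdmissible.const_mem {L : Set (Ω →ₘ[μ] ℝ)} {nrm : (Ω →ₘ[μ] ℝ) → ℝ}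
    (hL : IsAdmissible L nrm) (c : ℝ) : (AEEqFun.const Ω c : Ω →ₘ[μ] ℝ) ∈ L :=
  hL.linfty_subset _ (essBdd_const c)

lemma integrable_of_mem_kdual {EE : Set (Ω →ₘ[μ] ℝ)} {nrmE : (Ω →ₘ[μ] ℝ) → ℝ}
    (hE : IsAdmissible EE nrmE) {ψ : Ω →ₘ[μ] ℝ} (hψ : ψ ∈ kdual EE) : Integrable ψ μ := by
  refine (hψ _ (hE.const_mem 1)).congr ?_
  filter_upwards [AEEqFun.coeFn_const Ω (1 : ℝ)] with ω h
  rw [h, Function.const_apply, one_mul]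

end RandomVariables

lemma exists_finsupp_forall_apply_eq_sum {ι : Type*} (f : StrongDual ℝ (ι → ℝ)) :
    ∃ c : ι →₀ ℝ, ∀ h : ι → ℝ, f h = c.sum fun j a => a * h j := by
  have hf : f.toLinearMap ∈ Submodule.span ℝ
      (Set.range fun j => LinearMap.proj (R := ℝ) (φ := fun _ : ι => ℝ) j) :=
    (LinearMap.mem_span_iff_continuous _).mpr f.continuous
  obtain ⟨c, hc⟩ := Finsupp.mem_span_range_iff_exists_finsupp.mp hf
  refine ⟨c, fun h => ?_⟩
  simpa only [Finsupp.sum, LinearMap.coe_sum, LinearMap.coe_smul, LinearMap.coe_proj,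
    Finset.sum_apply, Pi.smul_apply, Function.eval, smul_eq_mul, ContinuousLinearMap.coe_coe]
    using (LinearMap.congr_fun hc h).symm

section Separation

variable {μ : Measure Ω} {EE : Set (Ω →ₘ[μ] ℝ)} {nrmE : (Ω →ₘ[μ] ℝ) → ℝ}

lemma exists_mem_kdual_ip_eq_sum {L : Set (Ω →ₘ[μ] ℝ)} (c : kdual L →₀ ℝ) :
    ∃ ψ ∈ kdual L, ∀ U ∈ L, ip U ψ = c.sum fun j a => a * ip U j := by
  set φ : Ω → ℝ := fun ω => ∑ j ∈ c.support, c j * (j : Ω →ₘ[μ] ℝ) ω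
  have hφ : AEStronglyMeasurable φ μ :=
    (Finset.measurable_sum c.support fun j _ =>
      (j : Ω →ₘ[μ] ℝ).measurable.const_mul _).aestronglyMeasurable
  have hmul : ∀ U : Ω →ₘ[μ] ℝ, (fun ω => U ω * AEEqFun.mk φ hφ ω) =ᵐ[μ]
      fun ω => ∑ j ∈ c.support, c j * (U ω * (j : Ω →ₘ[μ] ℝ) ω) := by
    intro U
    filter_upwards [AEEqFun.coeFn_mk φ hφ] with ω h
    simp only [h, φ, Finset.mul_sum]
    exact Finset.sum_congr rfl fun j _ => by ring
  have hint : ∀ U ∈ L, ∀ j ∈ c.support,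
      Integrable (fun ω => c j * (U ω * (j : Ω →ₘ[μ] ℝ) ω)) μ :=
    fun U hU j _ => (j.2 U hU).const_mul _
  refine ⟨AEEqFun.mk φ hφ, fun U hU => ?_, fun U hU => ?_⟩
  · exact (integrable_finsetSum _ (hint U hU)).congr (hmul U).symm
  · rw [ip, integral_congr_ae (hmul U), Finsupp.sum, integral_finsetSum _ (hint U hU)]
    exact Finset.sum_congr rfl fun j _ => integral_const_mul _ _

/-- Hahn–Banach in the product space `ℝ^{E'}`, into which `σ(E,E')` embeds `E`; continuous
functionals there depend on finitely many coordinates, which yields an element of `E'`. -/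
lemma exists_mem_kdual_separating (hE : IsAdmissible EE nrmE) {A : Set (Ω →ₘ[μ] ℝ)}
    (hAsub : A ⊆ EE)
    (hAconv : ∀ U ∈ A, ∀ V ∈ A, ∀ t : ℝ, 0 ≤ t → t ≤ 1 → t • U + (1 - t) • V ∈ A)
    (hAcl : @IsClosed (↥EE) (wtop1 EE (kdual EE)) {U : ↥EE | (U : Ω →ₘ[μ] ℝ) ∈ A})
    {U₀ : Ω →ₘ[μ] ℝ} (hU₀ : U₀ ∈ EE) (hU₀A : U₀ ∉ A) :
    ∃ ψ ∈ kdual EE, ∃ c : ℝ, ip U₀ ψ < c ∧ ∀ V ∈ A, c ≤ ip V ψ := by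
  let := wtop1 EE (kdual EE)
  set T : ↥EE → (↥(kdual EE) → ℝ) := fun U W => ip (U : Ω →ₘ[μ] ℝ) W
  set s : Set ↥EE := {U | (U : Ω →ₘ[μ] ℝ) ∈ A}
  have hconv : Convex ℝ (T '' s) := by
    rintro _ ⟨u, hu, rfl⟩ _ ⟨v, hv, rfl⟩ a b ha hb hab
    obtain rfl : b = 1 - a := by linarith
    refine ⟨⟨_, hAsub (hAconv _ hu _ hv a ha (by linarith))⟩, hAconv _ hu _ hv a ha (by linarith),
      funext fun W => ?_⟩
    simp only [T, Pi.add_apply, Pi.smul_apply, smul_eq_mul]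
    rw [ip_add (W.2 _ (hE.smul_mem _ _ u.2)) (W.2 _ (hE.smul_mem _ _ v.2)), ip_smul, ip_smul]
  have hsep : T ⟨U₀, hU₀⟩ ∉ closure (T '' s) := by
    rw [← Set.mem_preimage, ← (⟨rfl⟩ : Topology.IsInducing T).closure_eq_preimage_closure_image,
      hAcl.closure_eq]
    exact hU₀A
  obtain ⟨f, u, hfU₀, hfA⟩ := geometric_hahn_banach_point_closed hconv.closure isClosed_closure hsep
  obtain ⟨c, hc⟩ := exists_finsupp_forall_apply_eq_sum f
  obtain ⟨ψ, hψ, hψc⟩ := exists_mem_kdual_ip_eq_sum c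
  have hfT : ∀ U : ↥EE, f (T U) = ip (U : Ω →ₘ[μ] ℝ) ψ := fun U => by rw [hc, hψc _ U.2]
  refine ⟨ψ, hψ, u, hfT ⟨U₀, hU₀⟩ ▸ hfU₀, fun V hV => ?_⟩
  rw [← hfT ⟨V, hAsub hV⟩]
  exact (hfA _ (subset_closure ⟨_, hV, rfl⟩)).le

lemma ip_nonneg_of_forall_le_ip (hE : IsAdmissible EE nrmE) {A : Set (Ω →ₘ[μ] ℝ)}
    (hA0 : (0 : Ω →ₘ[μ] ℝ) ∈ A) (hAmono : ∀ U ∈ A, ∀ V ∈ EE, (0 : Ω →ₘ[μ] ℝ) ≤ V → U + V ∈ A)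
    {ψ : Ω →ₘ[μ] ℝ} {c : ℝ} (hbd : ∀ V ∈ A, c ≤ ip V ψ)
    {W : Ω →ₘ[μ] ℝ} (hW : W ∈ EE) (hW0 : 0 ≤ W) : 0 ≤ ip W ψ := by
  by_contra! hneg
  set s := (|c| + 1) / -ip W ψ
  have hs : 0 < s := div_pos (by positivity) (neg_pos.mpr hneg)
  have hsW : s • W ∈ A := by
    simpa using hAmono 0 hA0 _ (hE.smul_mem s W hW) (smul_nonneg_of_nonneg hs.le hW0)
  have hsr : s * ip W ψ = -(|c| + 1) := by
    simp only [s]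
    field_simp [hneg.ne]
  have := hbd _ hsW
  rw [ip_smul, hsr] at this
  linarith [neg_abs_le c]

lemma nonneg_of_forall_ip_nonneg (hE : IsAdmissible EE nrmE) {ψ : Ω →ₘ[μ] ℝ}
    (hψ : ψ ∈ kdual EE) (h : ∀ W ∈ EE, 0 ≤ W → 0 ≤ ip W ψ) : 0 ≤ ψ := by
  refine nonneg_iff_ae_nonneg.mpr <|
    ae_nonneg_of_forall_setIntegral_nonneg (integrable_of_mem_kdual hE hψ) fun t ht _ => ?_
  have hind : AEStronglyMeasurable (t.indicator (1 : Ω → ℝ)) μ :=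
    (measurable_one.indicator ht).aestronglyMeasurable
  set W : Ω →ₘ[μ] ℝ := AEEqFun.mk _ hind
  have hWE : W ∈ EE := by
    refine hE.linfty_subset _ ⟨1, ?_⟩
    filter_upwards [AEEqFun.coeFn_mk _ hind] with ω hω
    rw [hω]
    by_cases hωt : ω ∈ t <;> simp [hωt]
  have hW0 : 0 ≤ W := by
    refine nonneg_iff_ae_nonneg.mpr ?_
    filter_upwards [AEEqFun.coeFn_mk _ hind] with ω hω
    rw [hω]
    exact Set.indicator_nonneg (fun _ _ => zero_le_one) ω
  have hWψ : ip W ψ = ∫ ω in t, ψ ω ∂μ := by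
    rw [ip, ← integral_indicator ht]
    refine integral_congr_ae ?_
    filter_upwards [AEEqFun.coeFn_mk _ hind] with ω hω
    rw [hω]
    by_cases hωt : ω ∈ t <;> simp [hωt]
  exact hWψ ▸ h W hWE hW0

end Separation

namespace IsAdmissibleAcceptance

variable {μ : Measure Ω} {EE : Set (Ω →ₘ[μ] ℝ)} {nrmE : (Ω →ₘ[μ] ℝ) → ℝ}
  {XX : Set (Fin d → (Ω →ₘ[μ] ℝ))} {S : (Fin d → (Ω →ₘ[μ] ℝ)) → (Ω →ₘ[μ] ℝ)}
  {A : Set (Ω →ₘ[μ] ℝ)}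

lemma exists_nonneg_separating (hE : IsAdmissible EE nrmE)
    (hA : IsAdmissibleAcceptance XX EE (kdual EE) S A) {U₀ : Ω →ₘ[μ] ℝ} (hU₀ : U₀ ∈ EE)
    (hU₀A : U₀ ∉ A) :
    ∃ ψ ∈ kdual EE, 0 ≤ ψ ∧ ∃ c : ℝ, ip U₀ ψ < c ∧ ∀ V ∈ A, c ≤ ip V ψ := by
  obtain ⟨ψ, hψ, c, hU₀c, hbd⟩ :=
    exists_mem_kdual_separating hE hA.subset hA.convex hA.closed hU₀ hU₀A
  refine ⟨ψ, hψ, nonneg_of_forall_ip_nonneg hE hψ fun W hW hW0 => ?_, c, hU₀c, hbd⟩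
  exact ip_nonneg_of_forall_le_ip hE hA.zero_mem hA.mono hbd hW hW0

lemma mem_iff_forall_nonneg_kdual (hE : IsAdmissible EE nrmE)
    (hA : IsAdmissibleAcceptance XX EE (kdual EE) S A) {U : Ω →ₘ[μ] ℝ} (hU : U ∈ EE) :
    U ∈ A ↔ ∀ ψ ∈ kdual EE, 0 ≤ ψ → ∀ c : ℝ, (∀ V ∈ A, c ≤ ip V ψ) → c ≤ ip U ψ := by
  refine ⟨fun hUA _ _ _ _ hbd => hbd U hUA, fun h => ?_⟩
  by_contra hUA
  obtain ⟨ψ, hψ, hψ0, c, hUc, hbd⟩ := hA.exists_nonneg_separating hE hU hUA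
  exact (h ψ hψ hψ0 c hbd).not_gt hUc

lemma isClosed_setOf_mem (hE : IsAdmissible EE nrmE)
    (hA : IsAdmissibleAcceptance XX EE (kdual EE) S A) {P : Type*} [TopologicalSpace P]
    {g : P → Ω →ₘ[μ] ℝ} (hg : ∀ p, g p ∈ EE)
    (husc : ∀ ψ ∈ kdual EE, 0 ≤ ψ → UpperSemicontinuous fun p => ip (g p) ψ) :
    IsClosed {p | g p ∈ A} := by
  have : {p | g p ∈ A} = ⋂ ψ ∈ {ψ ∈ kdual EE | 0 ≤ ψ}, ⋂ c ∈ {c : ℝ | ∀ V ∈ A, c ≤ ip V ψ},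
      (fun p => ip (g p) ψ) ⁻¹' Ici c := by
    ext p
    simp only [Set.mem_ofPred_eq, hA.mem_iff_forall_nonneg_kdual hE (hg p), Set.mem_iInter,
      Set.mem_preimage, Set.mem_Ici, and_imp]
  rw [this]
  exact isClosed_biInter fun ψ hψ =>
    isClosed_biInter fun c _ => (husc ψ hψ.1 hψ.2).isClosed_preimage c

lemma exists_kdual_integral_pos_bddBelow (hE : IsAdmissible EE nrmE)
    (hA : IsAdmissibleAcceptance XX EE (kdual EE) S A) {U₀ : Ω →ₘ[μ] ℝ} (hU₀ : U₀ ∈ EE)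
    (hU₀A : U₀ ∉ A) :
    ∃ ψ ∈ kdual EE, 0 < ∫ ω, ψ ω ∂μ ∧ ∃ c : ℝ, ∀ V ∈ A, c ≤ ip V ψ := by
  obtain ⟨ψ, hψ, hψ0, c, hU₀c, hbd⟩ := hA.exists_nonneg_separating hE hU₀ hU₀A
  refine ⟨ψ, hψ, ?_, c, hbd⟩
  have hψ0' := nonneg_iff_ae_nonneg.mp hψ0
  refine (integral_nonneg_of_ae hψ0').lt_of_ne fun hzero => ?_
  have hψ_ae : (ψ : Ω → ℝ) =ᵐ[μ] 0 :=
    (integral_eq_zero_iff_of_nonneg_ae hψ0' (integrable_of_mem_kdual hE hψ)).mp hzero.symm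
  have hU₀ψ : ip U₀ ψ = 0 := by
    rw [ip, integral_eq_zero_of_ae]
    filter_upwards [hψ_ae] with ω h
    rw [h, Pi.zero_apply, mul_zero]
  have hc0 : c ≤ 0 := (hbd _ hA.zero_mem).trans_eq (ip_zero ψ)
  linarith

lemma add_const_mem_of_le (hE : IsAdmissible EE nrmE)
    (hA : IsAdmissibleAcceptance XX EE (kdual EE) S A) {U V W : Ω →ₘ[μ] ℝ} (hU : U ∈ EE)
    (hV : V ∈ EE) (hW : W ∈ EE) {t : ℝ} (ht0 : 0 ≤ t) (ht1 : t ≤ 1)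
    (hle : t • U + (1 - t) • V ≤ W) {a b : ℝ} (ha : U + AEEqFun.const Ω a ∈ A)
    (hb : V + AEEqFun.const Ω b ∈ A) : W + AEEqFun.const Ω (t * a + (1 - t) * b) ∈ A := by
  have hgap : W - (t • U + (1 - t) • V) ∈ EE :=
    hE.sub_mem hW (hE.add_mem _ (hE.smul_mem _ _ hU) _ (hE.smul_mem _ _ hV))
  convert hA.mono _ (hA.convex _ ha _ hb t ht0 ht1) _ hgap (sub_nonneg_of_le' hle) using 1
  rw [smul_add, smul_add, smul_const, smul_const, ← const_add_const]
  abel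

end IsAdmissibleAcceptance

lemma le_coe_mul_add_coe_mul {f g h : EReal} {t : ℝ} (ht0 : 0 < t) (ht1 : t < 1) (hf : f ≠ ⊥)
    (hg : g ≠ ⊥) (H : ∀ a b : ℝ, f = a → g = b → h ≤ ((t * a + (1 - t) * b : ℝ) : EReal)) :
    h ≤ (t : EReal) * f + ((1 - t : ℝ) : EReal) * g := by
  have ht1' : 0 < 1 - t := sub_pos.mpr ht1
  induction f using EReal.rec <;> induction g using EReal.rec
  all_goals first
    | exact absurd rfl hf | exact absurd rfl hg
    | exact_mod_cast H _ _ rfl rfl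
    | simp only [EReal.coe_mul_top_of_pos ht0, EReal.coe_mul_top_of_pos ht1', ← EReal.coe_mul,
        EReal.top_add_coe, EReal.coe_add_top, EReal.top_add_top, le_top]

lemma mem_of_iInf_coe_le {F : Set ℝ} (hF : IsClosed F) (hup : ∀ a ∈ F, ∀ b, a ≤ b → b ∈ F)
    {y : ℝ} (h : ⨅ m ∈ F, (m : EReal) ≤ y) : y ∈ F := by
  have hIoi : Ioi y ⊆ F := fun b hb => by
    obtain ⟨m, hm, hmb⟩ : ∃ m ∈ F, (m : EReal) < b := by
      simpa only [iInf_lt_iff, exists_prop] using h.trans_lt (EReal.coe_lt_coe_iff.mpr hb)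
    exact hup m hm b (EReal.coe_lt_coe_iff.mp hmb).le
  exact hF.closure_subset_iff.mpr hIoi (closure_Ioi y ▸ Set.self_mem_Ici)

section RiskMeasure

variable {μ : Measure Ω} {EE : Set (Ω →ₘ[μ] ℝ)} {nrmE : (Ω →ₘ[μ] ℝ) → ℝ}
  {XX XX' : Set (Fin d → (Ω →ₘ[μ] ℝ))} {S : (Fin d → (Ω →ₘ[μ] ℝ)) → (Ω →ₘ[μ] ℝ)}
  {A : Set (Ω →ₘ[μ] ℝ)}

lemma rhoT_le_of_mem {X : Fin d → (Ω →ₘ[μ] ℝ)} {y : ℝ} (h : S X + AEEqFun.const Ω y ∈ A) :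
    rhoT μ S A X ≤ y :=
  iInf₂_le y h

lemma bot_lt_rhoT (hE : IsAdmissible EE nrmE) {X : Fin d → (Ω →ₘ[μ] ℝ)} (hSX : S X ∈ EE)
    {ψ : Ω →ₘ[μ] ℝ} (hψ : ψ ∈ kdual EE) (hpos : 0 < ∫ ω, ψ ω ∂μ) {c : ℝ}
    (hbd : ∀ V ∈ A, c ≤ ip V ψ) : ⊥ < rhoT μ S A X := by
  refine (EReal.bot_lt_coe ((c - ip (S X) ψ) / ∫ ω, ψ ω ∂μ)).trans_le (le_iInf₂ fun m hm => ?_)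
  have := hbd _ hm
  rw [ip_add_const (hψ _ hSX) (integrable_of_mem_kdual hE hψ)] at this
  exact EReal.coe_le_coe_iff.mpr ((div_le_iff₀ hpos).mpr (by linarith))

lemma rhoT_le_iff (hE : IsAdmissible EE nrmE) (hA : IsAdmissibleAcceptance XX EE (kdual EE) S A)
    {X : Fin d → (Ω →ₘ[μ] ℝ)} (hSX : S X ∈ EE) (y : ℝ) :
    rhoT μ S A X ≤ y ↔ S X + AEEqFun.const Ω y ∈ A := by
  refine ⟨fun h => mem_of_iInf_coe_le ?_ (fun a ha b hab => ?_) h, rhoT_le_of_mem⟩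
  · refine hA.isClosed_setOf_mem hE (fun m => hE.add_mem _ hSX _ (hE.const_mem m))
      fun ψ hψ _ => ?_
    simp_rw [ip_add_const (hψ _ hSX) (integrable_of_mem_kdual hE hψ)]
    exact (continuous_const.add (continuous_id.mul continuous_const)).upperSemicontinuous
  · have := hA.mono _ ha _ (hE.const_mem (b - a)) (const_nonneg (sub_nonneg.mpr hab))
    rwa [add_assoc, const_add_const, add_sub_cancel] at this

lemma rhoT_smul_add_smul_le {EE' : Set (Ω →ₘ[μ] ℝ)} (hE : IsAdmissible EE nrmE)
    (hS : IsAdmissibleImpact XX XX' EE EE' S) (hA : IsAdmissibleAcceptance XX EE (kdual EE) S A)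
    (hbot : ∀ X ∈ XX, ⊥ < rhoT μ S A X) {X Y : Fin d → (Ω →ₘ[μ] ℝ)} (hX : X ∈ XX) (hY : Y ∈ XX)
    {t : ℝ} (ht0 : 0 ≤ t) (ht1 : t ≤ 1) (hXY : t • X + (1 - t) • Y ∈ XX) :
    rhoT μ S A (t • X + (1 - t) • Y) ≤
      (t : EReal) * rhoT μ S A X + ((1 - t : ℝ) : EReal) * rhoT μ S A Y := by
  rcases ht0.eq_or_lt with rfl | ht0'
  · simp
  rcases ht1.eq_or_lt with rfl | ht1'
  · simp
  refine le_coe_mul_add_coe_mul ht0' ht1' (hbot X hX).ne' (hbot Y hY).ne' fun a b ha hb => ?_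
  refine rhoT_le_of_mem (hA.add_const_mem_of_le hE (hS.mapsTo X hX) (hS.mapsTo Y hY)
    (hS.mapsTo _ hXY) ht0 ht1 (hS.concave X hX Y hY t ht0 ht1) ?_ ?_)
  · exact (rhoT_le_iff hE hA (hS.mapsTo X hX) a).mp ha.le
  · exact (rhoT_le_iff hE hA (hS.mapsTo Y hY) b).mp hb.le

lemma lowerSemicontinuous_rhoT (hE : IsAdmissible EE nrmE)
    (hS : IsAdmissibleImpact XX XX' EE (kdual EE) S)
    (hA : IsAdmissibleAcceptance XX EE (kdual EE) S A) (hbot : ∀ X ∈ XX, ⊥ < rhoT μ S A X) :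
    @LowerSemicontinuous (↥XX) EReal (wtop XX XX') _
      (fun X : ↥XX => rhoT μ S A (X : Fin d → (Ω →ₘ[μ] ℝ))) := by
  let := wtop XX XX'
  refine lowerSemicontinuous_iff_isClosed_preimage.mpr fun y => ?_
  induction y using EReal.rec with
  | bot =>
    convert isClosed_empty
    exact Set.eq_empty_of_forall_notMem fun X hX => (hbot X X.2).not_ge hX
  | top =>
    convert isClosed_univ
    exact Set.eq_univ_of_forall fun X => show rhoT μ S A X ≤ ⊤ from le_top
  | coe y =>
    have hpre : (fun X : ↥XX => rhoT μ S A (X : Fin d → (Ω →ₘ[μ] ℝ))) ⁻¹' Iic (y : EReal) =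
        {X : ↥XX | S X + AEEqFun.const Ω y ∈ A} :=
      Set.ext fun X => rhoT_le_iff hE hA (hS.mapsTo X X.2) y
    rw [hpre]
    refine hA.isClosed_setOf_mem hE (fun X => hE.add_mem _ (hS.mapsTo X X.2) _ (hE.const_mem y))
      fun ψ hψ hψ0 => ?_
    have hsplit : (fun X : ↥XX => ip (S X + AEEqFun.const Ω y) ψ) =
        fun X : ↥XX => ip (S X) ψ + y * ∫ ω, ψ ω ∂μ :=
      funext fun X => ip_add_const (hψ _ (hS.mapsTo X X.2)) (integrable_of_mem_kdual hE hψ) y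
    rw [hsplit]
    exact (hS.usc ψ hψ hψ0).add continuous_const.upperSemicontinuous

lemma exists_nonpos_const_not_mem (hS0 : S 0 = 0) (hbot : ⊥ < rhoT μ S A 0) :
    ∃ c : ℝ, c ≤ 0 ∧ (AEEqFun.const Ω c : Ω →ₘ[μ] ℝ) ∉ A := by
  obtain ⟨r, -, hr⟩ := EReal.exists_between_coe_real hbot
  refine ⟨min r 0, min_le_right _ _, fun hmem => hr.not_ge ?_⟩
  have := rhoT_le_of_mem (S := S) (A := A) (X := 0) (y := min r 0) (by rwa [hS0, zero_add])
  exact this.trans (EReal.coe_le_coe_iff.mpr (min_le_left _ _))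

end RiskMeasure

theorem statement17_general {μ : Measure Ω} {d : ℕ}
    (Li : Fin d → Set (Ω →ₘ[μ] ℝ)) (nrmX : Fin d → ((Ω →ₘ[μ] ℝ) → ℝ))
    (EE : Set (Ω →ₘ[μ] ℝ)) (nrmE : (Ω →ₘ[μ] ℝ) → ℝ)
    (S : (Fin d → (Ω →ₘ[μ] ℝ)) → (Ω →ₘ[μ] ℝ)) (A : Set (Ω →ₘ[μ] ℝ))
    (hLi : ∀ i, IsAdmissible (Li i) (nrmX i))
    (hE : IsAdmissible EE nrmE)
    (hS : IsAdmissibleImpact (prodSet Li) (prodSet fun i => kdual (Li i)) EE (kdual EE) S)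
    (hA : IsAdmissibleAcceptance (prodSet Li) EE (kdual EE) S A) :
    -- convexity
    (∀ X ∈ prodSet Li, ∀ Y ∈ prodSet Li, ∀ t : ℝ, 0 ≤ t → t ≤ 1 →
        rhoT μ S A (t • X + (1 - t) • Y) ≤
          (t : EReal) * rhoT μ S A X + ((1 - t : ℝ) : EReal) * rhoT μ S A Y) ∧
    -- `σ(X,X')`-lower semicontinuity
    (@LowerSemicontinuous (↥(prodSet Li)) EReal
        (wtop (prodSet Li) (prodSet fun i => kdual (Li i))) _
        (fun X : ↥(prodSet Li) => rhoT μ S A (X : Fin d → (Ω →ₘ[μ] ℝ)))) ∧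
    -- `ρ̃(0) ≤ 0`
    (rhoT μ S A 0 ≤ 0) ∧
    -- properness characterizations
    (ProperOn (prodSet Li) (rhoT μ S A) ↔ ⊥ < rhoT μ S A 0) ∧
    (ProperOn (prodSet Li) (rhoT μ S A) ↔
      A ∩ {U : Ω →ₘ[μ] ℝ | ∃ c : ℝ, c ≤ 0 ∧ U = (AEEqFun.const Ω c : Ω →ₘ[μ] ℝ)} ≠
        {U : Ω →ₘ[μ] ℝ | ∃ c : ℝ, c ≤ 0 ∧ U = (AEEqFun.const Ω c : Ω →ₘ[μ] ℝ)}) := by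
  obtain ⟨X₀, hX₀, hX₀A⟩ := hA.preimage_proper
  obtain ⟨ψ, hψ, hψpos, c, hbd⟩ :=
    hA.exists_kdual_integral_pos_bddBelow hE (hS.mapsTo X₀ hX₀) hX₀A
  have hbot : ∀ X ∈ prodSet Li, ⊥ < rhoT μ S A X := fun X hX =>
    bot_lt_rhoT hE (hS.mapsTo X hX) hψ hψpos hbd
  have h0 : (0 : Fin d → (Ω →ₘ[μ] ℝ)) ∈ prodSet Li := fun i => (hLi i).zero_mem
  have hρ0 : rhoT μ S A 0 ≤ 0 :=
    rhoT_le_of_mem (y := 0) (by rw [hS.normalized, zero_add]; exact hA.zero_mem)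
  have hproper : ProperOn (prodSet Li) (rhoT μ S A) :=
    ⟨fun X hX => (hbot X hX).ne', 0, h0, ne_top_of_le_ne_top EReal.zero_ne_top hρ0⟩
  refine ⟨fun X hX Y hY t ht0 ht1 => rhoT_smul_add_smul_le hE hS hA hbot hX hY ht0 ht1 ?_,
    lowerSemicontinuous_rhoT hE hS hA hbot, hρ0, iff_of_true hproper (hbot 0 h0),
    iff_of_true hproper fun heq => ?_⟩
  · exact fun i => (hLi i).add_mem _ ((hLi i).smul_mem _ _ (hX i)) _ ((hLi i).smul_mem _ _ (hY i))
  · obtain ⟨c, hc, hcA⟩ := exists_nonpos_const_not_mem hS.normalized (hbot 0 h0)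
    have hcmem : AEEqFun.const Ω c ∈ {U : Ω →ₘ[μ] ℝ | ∃ c : ℝ, c ≤ 0 ∧ U = AEEqFun.const Ω c} :=
      ⟨c, hc, rfl⟩
    exact hcA (heq.symm ▸ hcmem).1

/-- basic properties of `ρ̃` and characterization of its properness. -/
theorem statement17 {μ : Measure Ω} [IsProbabilityMeasure μ] {d : ℕ}
    (Li : Fin d → Set (Ω →ₘ[μ] ℝ)) (nrmX : Fin d → ((Ω →ₘ[μ] ℝ) → ℝ))
    (EE : Set (Ω →ₘ[μ] ℝ)) (nrmE : (Ω →ₘ[μ] ℝ) → ℝ)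
    (S : (Fin d → (Ω →ₘ[μ] ℝ)) → (Ω →ₘ[μ] ℝ)) (A : Set (Ω →ₘ[μ] ℝ))
    (hLi : ∀ i, IsAdmissible (Li i) (nrmX i))
    (hE : IsAdmissible EE nrmE)
    (hS : IsAdmissibleImpact (prodSet Li) (prodSet fun i => kdual (Li i)) EE (kdual EE) S)
    (hA : IsAdmissibleAcceptance (prodSet Li) EE (kdual EE) S A) :
    -- convexity
    (∀ X ∈ prodSet Li, ∀ Y ∈ prodSet Li, ∀ t : ℝ, 0 ≤ t → t ≤ 1 →
        rhoT μ S A (t • X + (1 - t) • Y) ≤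
          (t : EReal) * rhoT μ S A X + ((1 - t : ℝ) : EReal) * rhoT μ S A Y) ∧
    -- `σ(X,X')`-lower semicontinuity
    (@LowerSemicontinuous (↥(prodSet Li)) EReal
        (wtop (prodSet Li) (prodSet fun i => kdual (Li i))) _
        (fun X : ↥(prodSet Li) => rhoT μ S A (X : Fin d → (Ω →ₘ[μ] ℝ)))) ∧
    -- `ρ̃(0) ≤ 0`
    (rhoT μ S A 0 ≤ 0) ∧
    -- properness characterizations
    (ProperOn (prodSet Li) (rhoT μ S A) ↔ ⊥ < rhoT μ S A 0) ∧
    (ProperOn (prodSet Li) (rhoT μ S A) ↔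
      A ∩ {U : Ω →ₘ[μ] ℝ | ∃ c : ℝ, c ≤ 0 ∧ U = (AEEqFun.const Ω c : Ω →ₘ[μ] ℝ)} ≠
        {U : Ω →ₘ[μ] ℝ | ∃ c : ℝ, c ≤ 0 ∧ U = (AEEqFun.const Ω c : Ω →ₘ[μ] ℝ)}) :=
  statement17_general Li nrmX EE nrmE S A hLi hE hS hA

end SystemicRisk
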